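/- For the n-ray sun graph L_n with n ≥ 2, with A = U_2^{top}(L^{-0}) ∪ U_2^{top}(L^{-1}) and B = {c ∈ U_2^{top}(L_n) : c meets both A_0 and A_1}, one has A ∪ B = U_2^{top}(L_n), and A ∩ B is homeomorphic to [0,1]; consequently π_1(U_2^{top}(L_n), c_*) ≅ π_1(A, c_*) for the base configuration c_* = {1, ζ} with ζ = e^{2πi/n}. -/

import Mathlib

/-!
Let `confDepth m j c` be the sum of `‖z‖ - 1` over the points `z` of `c` on the arm `A_j`. A
configuration lies in `A` exactly when one of its depths into `A_0` and `A_1` vanishes, i.e. when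
`minDepth m c = 0`. Pulling every point radially towards the circle by `t * minDepth m c` is a
homotopy from the identity to a retraction onto `A` that fixes `A`, so the inclusion of `A` is a
homotopy equivalence and an isomorphism on `π₁` (no Van Kampen argument is needed). A configuration
in `A ∩ B` is a point on `A_0` and a point on `A_1`, one of them on the circle, so it is determined
by the difference of its two depths, which ranges over an interval. Continuity on the quotient
`U_2` is checked on ordered configurations, the projection being open.
-/

open Set CategoryTheory Complex

open scoped Real

noncomputable section

/-- Ordered configuration space: injective `n`-tuples in `X`
    (the complement of the fat diagonal in `X^n`), with the subspace topology. -/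
def OrdConf (n : ℕ) (X : Type*) [TopologicalSpace X] : Type _ :=
  {f : Fin n → X // Function.Injective f}

instance (n : ℕ) (X : Type*) [TopologicalSpace X] : TopologicalSpace (OrdConf n X) :=
  instTopologicalSpaceSubtype

/-- The unordered `n`-point configuration space `U_n^{top}(X)`:
    the set of `n`-element subsets of `X`. -/
def UConf (n : ℕ) (X : Type*) [TopologicalSpace X] : Type _ :=
  {s : Set X // s.Finite ∧ s.ncard = n}

/-- The natural projection `p : X^n - Δ → U_n^{top}(X)`, `(x_1,…,x_n) ↦ {x_1,…,x_n}`. -/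
def confProj (n : ℕ) (X : Type*) [TopologicalSpace X] : OrdConf n X → UConf n X :=
  fun f => ⟨Set.range f.1, Set.finite_range _, by
    rw [← Set.image_univ, Set.ncard_image_of_injective _ f.2, Set.ncard_univ,
      Nat.card_eq_fintype_card, Fintype.card_fin]⟩

/-- `U_n^{top}(X)` carries the quotient topology from `p`. -/
instance (n : ℕ) (X : Type*) [TopologicalSpace X] : TopologicalSpace (UConf n X) :=
  TopologicalSpace.coinduced (confProj n X) inferInstance

/-- The `j`-th radial arm `A_j = {r·e^{2πij/m} : 1 ≤ r ≤ 2}` of the `m`-ray sun graph. -/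
def Arm (m j : ℕ) : Set ℂ :=
  {z | ∃ r : ℝ, 1 ≤ r ∧ r ≤ 2 ∧ z = (r : ℂ) * Complex.exp (2 * Real.pi * j / m * Complex.I)}

/-- The `m`-ray sun graph `L_m = S¹ ∪ A_0 ∪ ⋯ ∪ A_{m-1} ⊆ ℂ`. -/
def Lsun (m : ℕ) : Set ℂ :=
  Metric.sphere (0 : ℂ) 1 ∪ ⋃ j ∈ Finset.range m, Arm m j

/-- `L^{-j} = Cl_{Lₙ}(Lₙ − A_j)`, the closure of the sun graph minus the arm `A_j`. -/
def LminusArm (m j : ℕ) : Set ℂ := closure (Lsun m \ Arm m j)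

open Function Topology

section ConfigurationSpace

variable {X Y Z : Type*} [TopologicalSpace X] [TopologicalSpace Y] [TopologicalSpace Z] {n : ℕ}

theorem UConf.ext {c d : UConf n X} (h : c.1 = d.1) : c = d := Subtype.ext h

theorem UConf.eq_pair {c : UConf 2 X} {x y : X} (hx : x ∈ c.1) (hy : y ∈ c.1) (hxy : x ≠ y) :
    c.1 = {x, y} :=
  (eq_of_subset_of_ncard_le (pair_subset hx hy) (by rw [c.2.2, ncard_pair hxy]) c.2.1).symm

theorem surjective_confProj : Surjective (confProj n X) := by
  intro c
  have : Finite c.1 := c.2.1.to_subtype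
  let e : c.1 ≃ Fin n := Finite.equivFinOfCardEq c.2.2
  refine ⟨⟨Subtype.val ∘ e.symm, Subtype.val_injective.comp e.symm.injective⟩,
    UConf.ext ?_⟩
  exact e.symm.surjective.range_comp _ |>.trans Subtype.range_coe

theorem exists_perm_of_confProj_eq {f g : OrdConf n X} (h : confProj n X f = confProj n X g) :
    ∃ σ : Equiv.Perm (Fin n), g.1 ∘ σ = f.1 := by
  have hr : range f.1 = range g.1 := congrArg Subtype.val h
  refine ⟨(Equiv.ofInjective f.1 f.2).trans ((Equiv.setCongr hr).trans
    (Equiv.ofInjective g.1 g.2).symm), funext fun i => ?_⟩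
  simp [Equiv.apply_ofInjective_symm]

/-- The saturation of `V` is the union of its translates under the permutations of `Fin n`. -/
theorem isOpenMap_confProj : IsOpenMap (confProj n X) := by
  intro V hV
  let permute (σ : Equiv.Perm (Fin n)) : OrdConf n X → OrdConf n X :=
    fun f => ⟨f.1 ∘ σ, f.2.comp σ.injective⟩
  have hsat : confProj n X ⁻¹' (confProj n X '' V) = ⋃ σ, permute σ ⁻¹' V := by
    ext g
    simp only [mem_preimage, mem_image, mem_iUnion]
    constructor
    · rintro ⟨f, hf, hfg⟩
      obtain ⟨σ, hσ⟩ := exists_perm_of_confProj_eq hfg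
      exact ⟨σ, by convert hf; exact Subtype.ext hσ⟩
    · rintro ⟨σ, hσ⟩
      exact ⟨permute σ g, hσ, UConf.ext (σ.surjective.range_comp g.1)⟩
  rw [isOpen_coinduced, hsat]
  have hpermute (σ : Equiv.Perm (Fin n)) : Continuous (permute σ) :=
    (continuous_pi fun i => (continuous_apply (σ i)).comp continuous_subtype_val).subtype_mk
      fun f : OrdConf n X => f.2.comp σ.injective
  exact isOpen_iUnion fun σ => hV.preimage (hpermute σ)

theorem isOpenQuotientMap_confProj : IsOpenQuotientMap (confProj n X) :=
  ⟨surjective_confProj, continuous_coinduced_rng, isOpenMap_confProj⟩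

theorem UConf.continuous_finsum_mem {M : Type*} [AddCommMonoid M] [TopologicalSpace M]
    [ContinuousAdd M] {φ : X → M} (hφ : Continuous φ) :
    Continuous fun c : UConf n X => ∑ᶠ x ∈ c.1, φ x := by
  rw [← isOpenQuotientMap_confProj.continuous_comp_iff]
  have : (fun c : UConf n X => ∑ᶠ x ∈ c.1, φ x) ∘ confProj n X =
      fun f => ∑ i, φ (f.1 i) :=
    funext fun f => (finsum_mem_range f.2).trans (finsum_eq_sum_of_fintype _)
  rw [this]
  exact continuous_finsetSum _ fun i _ =>
    hφ.comp ((continuous_apply i).comp continuous_subtype_val)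

def UConf.image (c : UConf n X) (f : X → Y) (hf : InjOn f c.1) : UConf n Y :=
  ⟨f '' c.1, c.2.1.image f, hf.ncard_image.trans c.2.2⟩

theorem UConf.continuous_image (F : Z × UConf n X → X → Y)
    (hF : Continuous fun q : (Z × UConf n X) × X => F q.1 q.2) (hinj : ∀ p, InjOn (F p) p.2.1) :
    Continuous fun p : Z × UConf n X => p.2.image (F p) (hinj p) := by
  rw [← (IsOpenQuotientMap.id.prodMap isOpenQuotientMap_confProj).continuous_comp_iff]
  let lift (q : Z × OrdConf n X) : OrdConf n Y :=
    ⟨fun i => F (q.1, confProj n X q.2) (q.2.1 i),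
      fun i j h => q.2.2 (hinj _ (mem_range_self i) (mem_range_self j) h)⟩
  have hlift : Continuous lift := Continuous.subtype_mk (continuous_pi fun i => hF.comp
    ((continuous_fst.prodMk (continuous_coinduced_rng.comp continuous_snd)).prodMk
      ((continuous_apply i).comp (continuous_subtype_val.comp continuous_snd)))) _
  have : (fun p : Z × UConf n X => p.2.image (F p) (hinj p)) ∘ Prod.map id (confProj n X) =
      confProj n Y ∘ lift :=
    funext fun q => UConf.ext (range_comp _ _).symm
  rw [this]
  exact continuous_coinduced_rng.comp hlift

def UConf.pair (x y : X) (h : x ≠ y) : UConf 2 X := ⟨{x, y}, toFinite _, ncard_pair h⟩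

theorem UConf.continuous_pair {f g : Z → X} (hf : Continuous f) (hg : Continuous g)
    (h : ∀ t, f t ≠ g t) : Continuous fun t => UConf.pair (f t) (g t) (h t) := by
  let lift (t : Z) : OrdConf 2 X := ⟨![f t, g t], by
    intro i j hij; fin_cases i <;> fin_cases j <;> simp_all [(h t).symm]⟩
  have : (fun t => UConf.pair (f t) (g t) (h t)) = confProj 2 X ∘ lift :=
    funext fun t => UConf.ext (Matrix.range_cons_cons_empty _ _ _).symm
  rw [this]
  refine continuous_coinduced_rng.comp (Continuous.subtype_mk (continuous_pi fun i => ?_) _)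
  fin_cases i
  exacts [hf, hg]

end ConfigurationSpace

section SunGraph

variable {m i j : ℕ} {z : ℂ}

def armDir (m j : ℕ) : ℂ := Complex.exp (2 * Real.pi * j / m * Complex.I)

theorem norm_armDir : ‖armDir m j‖ = 1 := by
  rw [armDir, show 2 * Real.pi * j / m * I = ((2 * Real.pi * j / m : ℝ) : ℂ) * I by
    push_cast; ring]
  exact Complex.norm_exp_ofReal_mul_I _

theorem armDir_injective (hi : i < m) (hj : j < m) (h : armDir m i = armDir m j) : i = j := by
  have hpow (k : ℕ) : armDir m k = Complex.exp (2 * Real.pi * I / m) ^ k := by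
    rw [armDir, ← Complex.exp_nat_mul]; ring_nf
  rw [hpow, hpow] at h
  exact (Complex.isPrimitiveRoot_exp m (by omega)).pow_inj hi hj h

theorem norm_ofReal_mul_armDir {r : ℝ} (hr : 0 ≤ r) : ‖(r : ℂ) * armDir m j‖ = r := by
  rw [norm_mul, norm_armDir, mul_one, Complex.norm_real, Real.norm_of_nonneg hr]

theorem mem_arm_iff : z ∈ Arm m j ↔ ‖z‖ ∈ Icc 1 2 ∧ z = ‖z‖ * armDir m j := by
  constructor
  · rintro ⟨r, h1, h2, rfl⟩
    change ‖(r : ℂ) * armDir m j‖ ∈ _ ∧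
      (r : ℂ) * armDir m j = ‖(r : ℂ) * armDir m j‖ * armDir m j
    rw [norm_ofReal_mul_armDir (by linarith)]
    exact ⟨⟨h1, h2⟩, rfl⟩
  · rintro ⟨⟨h1, h2⟩, hz⟩
    exact ⟨‖z‖, h1, h2, hz⟩

theorem ofReal_mul_armDir_mem_arm {r : ℝ} (hr : r ∈ Icc 1 2) :
    (r : ℂ) * armDir m j ∈ Arm m j :=
  ⟨r, hr.1, hr.2, rfl⟩

theorem eq_armDir_of_mem_arm (hz : z ∈ Arm m j) (h : ‖z‖ = 1) : z = armDir m j := by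
  rw [(mem_arm_iff.1 hz).2, h, Complex.ofReal_one, one_mul]

theorem isClosed_arm : IsClosed (Arm m j) := by
  have : Arm m j = (fun r : ℝ => (r : ℂ) * armDir m j) '' Icc 1 2 := by
    ext z; simp [Arm, armDir, eq_comm, and_assoc]
  rw [this]
  exact (isCompact_Icc.image (by fun_prop)).isClosed

theorem disjoint_arm (hi : i < m) (hj : j < m) (hij : i ≠ j) : Disjoint (Arm m i) (Arm m j) := by
  refine disjoint_left.2 fun z hzi hzj => hij (armDir_injective hi hj ?_)
  have hz : ‖z‖ ≠ 0 := by linarith [(mem_arm_iff.1 hzi).1.1]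
  have h := (mem_arm_iff.1 hzi).2.symm.trans (mem_arm_iff.1 hzj).2
  exact mul_left_cancel₀ (Complex.ofReal_ne_zero.2 hz) h

theorem arm_subset_lsun (hj : j < m) : Arm m j ⊆ Lsun m :=
  fun _ hz => Or.inr (mem_biUnion (Finset.mem_range.2 hj) hz)

theorem one_le_norm_of_mem_lsun (hz : z ∈ Lsun m) : 1 ≤ ‖z‖ := by
  rcases hz with hz | hz
  · rw [mem_sphere_zero_iff_norm.1 hz]
  · obtain ⟨k, -, hk⟩ := mem_iUnion₂.1 hz
    exact (mem_arm_iff.1 hk).1.1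

/-- Approached along the circle, the tip of an arm is a limit of points off the arm. -/
theorem armDir_mem_lminusArm : armDir m j ∈ LminusArm m j := by
  let w (t : ℝ) : ℂ := armDir m j * Complex.exp (t * I)
  have hw : Filter.Tendsto w (𝓝[>] 0) (𝓝 (armDir m j)) := by
    have : Continuous w := by fun_prop
    simpa [w] using (this.tendsto 0).mono_left nhdsWithin_le_nhds
  refine mem_closure_of_tendsto hw (Filter.mem_of_superset (Ioo_mem_nhdsGT Real.pi_pos) ?_)
  rintro t ⟨ht0, htπ⟩
  have hnorm : ‖w t‖ = 1 := by simp [w, norm_armDir, Complex.norm_exp_ofReal_mul_I]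
  refine ⟨Or.inl (mem_sphere_zero_iff_norm.2 hnorm), fun hwt => ?_⟩
  have h1 : Complex.exp (t * I) = 1 := by
    have := eq_armDir_of_mem_arm hwt hnorm
    rwa [mul_eq_left₀ (by simp [← norm_ne_zero_iff, norm_armDir])] at this
  have := congrArg Complex.im h1
  rw [Complex.exp_ofReal_mul_I_im, Complex.one_im] at this
  exact (Real.sin_pos_of_pos_of_lt_pi ht0 htπ).ne' this

theorem eq_armDir_of_mem_lminusArm (hj : j < m) (hz : z ∈ LminusArm m j) (hzj : z ∈ Arm m j) :
    z = armDir m j := by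
  have hclosed : IsClosed (Metric.sphere 0 1 ∪ ⋃ k ∈ (Finset.range m).erase j, Arm m k) :=
    Metric.isClosed_sphere.union (isClosed_biUnion_finset fun _ _ => isClosed_arm)
  have hsub :
      LminusArm m j ⊆ Metric.sphere 0 1 ∪ ⋃ k ∈ (Finset.range m).erase j, Arm m k := by
    refine closure_minimal ?_ hclosed
    rintro w ⟨hw | hw, hwj⟩
    · exact Or.inl hw
    · obtain ⟨k, hk, hwk⟩ := mem_iUnion₂.1 hw
      exact Or.inr (mem_biUnion (Finset.mem_erase.2 ⟨fun h => hwj (h ▸ hwk), hk⟩) hwk)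
  rcases hsub hz with hs | hk
  · exact eq_armDir_of_mem_arm hzj (mem_sphere_zero_iff_norm.1 hs)
  · obtain ⟨k, hk, hzk⟩ := mem_iUnion₂.1 hk
    obtain ⟨hkj, hkm⟩ := Finset.mem_erase.1 hk
    exact ((disjoint_arm (Finset.mem_range.1 hkm) hj hkj).ne_of_mem hzk hzj rfl).elim

end SunGraph

section Depth

variable {m i j : ℕ} {z : ℂ} {s : ℝ}

def armDepth (m j : ℕ) : ℂ → ℝ := (Arm m j).indicator fun z => ‖z‖ - 1

theorem armDepth_nonneg (z : ℂ) : 0 ≤ armDepth m j z :=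
  indicator_nonneg (fun _ hz => sub_nonneg.2 (mem_arm_iff.1 hz).1.1) z

theorem armDepth_of_mem (hz : z ∈ Arm m j) : armDepth m j z = ‖z‖ - 1 := indicator_of_mem hz _

theorem armDepth_of_mem_arm_of_ne (hi : i < m) (hj : j < m) (hij : i ≠ j) (hz : z ∈ Arm m i) :
    armDepth m j z = 0 :=
  indicator_of_notMem ((disjoint_arm hi hj hij).notMem_of_mem_left hz) _

theorem armDepth_eq_zero_of_mem_lminusArm (hj : j < m) (hz : z ∈ LminusArm m j) :
    armDepth m j z = 0 :=
  indicator_apply_eq_zero.2 fun hzj => by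
    rw [eq_armDir_of_mem_lminusArm hj hz hzj, norm_armDir, sub_self]

theorem mem_lminusArm_iff (hj : j < m) (hz : z ∈ Lsun m) :
    z ∈ LminusArm m j ↔ armDepth m j z = 0 := by
  refine ⟨armDepth_eq_zero_of_mem_lminusArm hj, fun h => ?_⟩
  by_cases hzj : z ∈ Arm m j
  · rw [armDepth_of_mem hzj, sub_eq_zero] at h
    rw [eq_armDir_of_mem_arm hzj h]
    exact armDir_mem_lminusArm
  · exact subset_closure ⟨hz, hzj⟩

/-- `Lsun m` is covered by the closed sets `Arm m j` and `LminusArm m j`, on which the depth is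
`‖z‖ - 1` and `0` respectively. -/
theorem continuousOn_armDepth (hj : j < m) : ContinuousOn (armDepth m j) (Lsun m) := by
  have hArm : ContinuousOn (armDepth m j) (Arm m j) :=
    (continuous_norm.sub continuous_const).continuousOn.congr fun _ hz => armDepth_of_mem hz
  have hRest : ContinuousOn (armDepth m j) (LminusArm m j) :=
    continuousOn_const.congr fun _ hz => armDepth_eq_zero_of_mem_lminusArm hj hz
  refine ((continuousOn_union_iff_of_isClosed isClosed_arm isClosed_closure).2
    ⟨hArm, hRest⟩).mono fun z hz => (em _).imp_right fun hzj => subset_closure ⟨hz, hzj⟩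

def radialPull (s : ℝ) (z : ℂ) : ℂ := z * ((max 1 (‖z‖ - s) / ‖z‖ : ℝ) : ℂ)

theorem radialPull_of_mem_arm (hz : z ∈ Arm m j) :
    radialPull s z = (max 1 (‖z‖ - s) : ℝ) * armDir m j := by
  have hz0 : (‖z‖ : ℂ) ≠ 0 :=
    Complex.ofReal_ne_zero.2 (by linarith [(mem_arm_iff.1 hz).1.1])
  rw [radialPull]
  nth_rw 1 [(mem_arm_iff.1 hz).2]
  push_cast
  field_simp

theorem radialPull_mem_arm (hs : 0 ≤ s) (hz : z ∈ Arm m j) : radialPull s z ∈ Arm m j := by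
  rw [radialPull_of_mem_arm hz]
  exact ofReal_mul_armDir_mem_arm
    ⟨le_max_left _ _, max_le one_le_two (by linarith [(mem_arm_iff.1 hz).1.2])⟩

theorem norm_radialPull_of_mem_arm (hz : z ∈ Arm m j) :
    ‖radialPull s z‖ = max 1 (‖z‖ - s) := by
  rw [radialPull_of_mem_arm hz, norm_ofReal_mul_armDir (zero_le_one.trans (le_max_left _ _))]

theorem radialPull_of_norm_eq_one (hs : 0 ≤ s) (hz : ‖z‖ = 1) : radialPull s z = z := by
  simp [radialPull, hz, hs]

theorem radialPull_zero (hz : 1 ≤ ‖z‖) : radialPull 0 z = z := by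
  have hz0 : ‖z‖ ≠ 0 := by linarith
  simp [radialPull, max_eq_right hz, hz0]

theorem radialPull_mem_lsun (hs : 0 ≤ s) (hz : z ∈ Lsun m) : radialPull s z ∈ Lsun m := by
  rcases hz with hz | hz
  · rw [radialPull_of_norm_eq_one hs (mem_sphere_zero_iff_norm.1 hz)]
    exact Or.inl hz
  · obtain ⟨k, hk, hzk⟩ := mem_iUnion₂.1 hz
    exact arm_subset_lsun (Finset.mem_range.1 hk) (radialPull_mem_arm hs hzk)

theorem continuous_radialPull : Continuous fun p : ↥(Lsun m) × ℝ => radialPull p.2 p.1 := by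
  have hnorm : Continuous fun p : ↥(Lsun m) × ℝ => ‖(p.1 : ℂ)‖ := by fun_prop
  refine (continuous_subtype_val.comp continuous_fst).mul (Complex.continuous_ofReal.comp
    ((continuous_const.max (hnorm.sub continuous_snd)).div hnorm fun p => ?_))
  linarith [one_le_norm_of_mem_lsun p.1.2]

end Depth

section Cover

variable {m j : ℕ} {c : UConf 2 ↥(Lsun m)}

def sunCoverA (m : ℕ) : Set (UConf 2 ↥(Lsun m)) :=
  {c | (∀ z : ↥(Lsun m), z ∈ c.1 → (z : ℂ) ∈ LminusArm m 0) ∨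
    ∀ z : ↥(Lsun m), z ∈ c.1 → (z : ℂ) ∈ LminusArm m 1}

def sunCoverB (m : ℕ) : Set (UConf 2 ↥(Lsun m)) :=
  {c | (∃ z : ↥(Lsun m), z ∈ c.1 ∧ (z : ℂ) ∈ Arm m 0) ∧
    ∃ z : ↥(Lsun m), z ∈ c.1 ∧ (z : ℂ) ∈ Arm m 1}

theorem sunCoverA_union_sunCoverB : sunCoverA m ∪ sunCoverB m = univ := by
  refine eq_univ_of_forall fun c => or_iff_not_imp_right.2 fun hc => ?_
  rw [sunCoverB, mem_ofPred_eq, not_and_or] at hc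
  simp only [not_exists, not_and] at hc
  exact hc.imp (fun h z hz => subset_closure ⟨z.2, h z hz⟩)
    (fun h z hz => subset_closure ⟨z.2, h z hz⟩)

def confDepth (m j : ℕ) (c : UConf 2 ↥(Lsun m)) : ℝ := ∑ᶠ z ∈ c.1, armDepth m j z

def minDepth (m : ℕ) (c : UConf 2 ↥(Lsun m)) : ℝ := min (confDepth m 0 c) (confDepth m 1 c)

theorem confDepth_of_eq_pair {x y : ↥(Lsun m)} (hc : c.1 = {x, y}) (hxy : x ≠ y) :
    confDepth m j c = armDepth m j x + armDepth m j y := by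
  rw [confDepth, hc, finsum_mem_pair hxy]

theorem confDepth_nonneg : 0 ≤ confDepth m j c := by
  obtain ⟨x, y, hxy, hc⟩ := ncard_eq_two.1 c.2.2
  rw [confDepth_of_eq_pair hc hxy]
  exact add_nonneg (armDepth_nonneg _) (armDepth_nonneg _)

theorem minDepth_nonneg : 0 ≤ minDepth m c := le_min confDepth_nonneg confDepth_nonneg

theorem continuous_confDepth (hj : j < m) : Continuous (confDepth m j) :=
  UConf.continuous_finsum_mem
    ((continuousOn_armDepth hj).comp_continuous continuous_subtype_val Subtype.prop)

theorem continuous_minDepth (hm : 2 ≤ m) : Continuous (minDepth m) :=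
  (continuous_confDepth (by omega)).min (continuous_confDepth (by omega))

theorem forall_mem_lminusArm_iff (hj : j < m) :
    (∀ z : ↥(Lsun m), z ∈ c.1 → (z : ℂ) ∈ LminusArm m j) ↔ confDepth m j c = 0 := by
  obtain ⟨x, y, hxy, hc⟩ := ncard_eq_two.1 c.2.2
  rw [confDepth_of_eq_pair hc hxy, add_eq_zero_iff_of_nonneg (armDepth_nonneg _)
    (armDepth_nonneg _), hc, ← mem_lminusArm_iff hj x.2, ← mem_lminusArm_iff hj y.2]
  simp only [mem_insert_iff, mem_singleton_iff, forall_eq_or_imp, forall_eq]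

theorem mem_sunCoverA_iff (hm : 2 ≤ m) : c ∈ sunCoverA m ↔ minDepth m c = 0 := by
  rw [sunCoverA, mem_ofPred_eq, forall_mem_lminusArm_iff (by omega),
    forall_mem_lminusArm_iff (by omega), minDepth]
  have h0 : 0 ≤ confDepth m 0 c := confDepth_nonneg
  have h1 : 0 ≤ confDepth m 1 c := confDepth_nonneg
  grind

theorem disjoint_arm_zero_one (hm : 2 ≤ m) : Disjoint (Arm m 0) (Arm m 1) :=
  disjoint_arm (by omega) (by omega) zero_ne_one

theorem exists_eq_pair_of_mem_sunCoverB (hm : 2 ≤ m) (hc : c ∈ sunCoverB m) :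
    ∃ x y : ↥(Lsun m), c.1 = {x, y} ∧ (x : ℂ) ∈ Arm m 0 ∧ (y : ℂ) ∈ Arm m 1 := by
  obtain ⟨⟨x, hx, hx0⟩, ⟨y, hy, hy1⟩⟩ := hc
  refine ⟨x, y, UConf.eq_pair hx hy fun hxy => ?_, hx0, hy1⟩
  exact (disjoint_arm_zero_one hm).ne_of_mem hx0 hy1 (congrArg Subtype.val hxy)

theorem confDepth_of_eq_pair_of_mem_arm (hm : 2 ≤ m) {x y : ↥(Lsun m)} (hc : c.1 = {x, y})
    (hx : (x : ℂ) ∈ Arm m 0) (hy : (y : ℂ) ∈ Arm m 1) :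
    confDepth m 0 c = ‖(x : ℂ)‖ - 1 ∧ confDepth m 1 c = ‖(y : ℂ)‖ - 1 := by
  have hxy : x ≠ y := fun h => (disjoint_arm_zero_one hm).ne_of_mem hx hy (congrArg Subtype.val h)
  rw [confDepth_of_eq_pair hc hxy, confDepth_of_eq_pair hc hxy, armDepth_of_mem hx,
    armDepth_of_mem hy, armDepth_of_mem_arm_of_ne (by omega) (by omega) one_ne_zero hy,
    armDepth_of_mem_arm_of_ne (by omega) (by omega) zero_ne_one hx, add_zero, zero_add]
  exact ⟨rfl, rfl⟩

theorem mem_sunCoverB_of_confDepth_pos (h0 : 0 < confDepth m 0 c) (h1 : 0 < confDepth m 1 c) :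
    c ∈ sunCoverB m := by
  have key (j : ℕ) (h : 0 < confDepth m j c) :
      ∃ z : ↥(Lsun m), z ∈ c.1 ∧ (z : ℂ) ∈ Arm m j := by
    by_contra! hno
    obtain ⟨x, y, hxy, hc⟩ := ncard_eq_two.1 c.2.2
    have hx := indicator_of_notMem (hno x (by simp [hc])) fun z : ℂ => ‖z‖ - 1
    have hy := indicator_of_notMem (hno y (by simp [hc])) fun z : ℂ => ‖z‖ - 1
    rw [confDepth_of_eq_pair hc hxy, armDepth, hx, hy, add_zero] at h
    exact h.false
  exact ⟨key 0 h0, key 1 h1⟩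

end Cover

section Retraction

variable {m : ℕ} {c : UConf 2 ↥(Lsun m)}

def pullIn (s : ℝ) (hs : 0 ≤ s) (z : ↥(Lsun m)) : ↥(Lsun m) :=
  ⟨radialPull s z, radialPull_mem_lsun hs z.2⟩

theorem pullIn_of_eq_zero {s : ℝ} {hs : 0 ≤ s} (h : s = 0) (z : ↥(Lsun m)) :
    pullIn s hs z = z :=
  Subtype.ext (h ▸ radialPull_zero (one_le_norm_of_mem_lsun z.2))

theorem mul_minDepth_nonneg (t : unitInterval) (c : UConf 2 ↥(Lsun m)) :
    0 ≤ (t : ℝ) * minDepth m c :=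
  mul_nonneg t.2.1 minDepth_nonneg

/-- If `minDepth m c > 0`, the two points of `c` lie on the arms `0` and `1`, which `pullIn`
preserves. -/
theorem injOn_pullIn (hm : 2 ≤ m) (t : unitInterval) (c : UConf 2 ↥(Lsun m)) :
    InjOn (pullIn (t * minDepth m c) (mul_minDepth_nonneg t c)) c.1 := by
  rcases minDepth_nonneg.eq_or_lt with h | h
  · intro x _ y _ hxy
    have ht : (t : ℝ) * minDepth m c = 0 := by rw [← h, mul_zero]
    rwa [pullIn_of_eq_zero ht, pullIn_of_eq_zero ht] at hxy
  · obtain ⟨x, y, hc, hx, hy⟩ := exists_eq_pair_of_mem_sunCoverB hm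
      (mem_sunCoverB_of_confDepth_pos (lt_min_iff.1 h).1 (lt_min_iff.1 h).2)
    have hs := mul_minDepth_nonneg t c
    have hne : pullIn _ hs x ≠ pullIn _ hs y := fun he => (disjoint_arm_zero_one hm).ne_of_mem
      (radialPull_mem_arm hs hx) (radialPull_mem_arm hs hy) (congrArg Subtype.val he)
    rw [hc]
    rintro a (rfl | rfl) b (rfl | rfl) hab
    exacts [rfl, (hne hab).elim, (hne hab.symm).elim, rfl]

def shrinkArms (m : ℕ) (hm : 2 ≤ m) (p : unitInterval × UConf 2 ↥(Lsun m)) :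
    UConf 2 ↥(Lsun m) :=
  p.2.image (pullIn (p.1 * minDepth m p.2) (mul_minDepth_nonneg p.1 p.2)) (injOn_pullIn hm p.1 p.2)

theorem continuous_shrinkArms (hm : 2 ≤ m) : Continuous (shrinkArms m hm) := by
  refine UConf.continuous_image _ ?_ _
  exact (continuous_radialPull.comp (continuous_snd.prodMk ((continuous_subtype_val.comp
    (continuous_fst.comp continuous_fst)).mul
    ((continuous_minDepth hm).comp (continuous_snd.comp continuous_fst))))).subtype_mk _

theorem shrinkArms_eq_self (hm : 2 ≤ m) {t : unitInterval} (h : (t : ℝ) * minDepth m c = 0) :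
    shrinkArms m hm (t, c) = c :=
  UConf.ext ((image_congr fun z _ => pullIn_of_eq_zero h z).trans (image_id _))

theorem shrinkArms_of_mem_sunCoverA (hm : 2 ≤ m) (hc : c ∈ sunCoverA m) (t : unitInterval) :
    shrinkArms m hm (t, c) = c :=
  shrinkArms_eq_self hm (by rw [(mem_sunCoverA_iff hm).1 hc, mul_zero])

theorem minDepth_shrinkArms_one (hm : 2 ≤ m) (c : UConf 2 ↥(Lsun m)) :
    minDepth m (shrinkArms m hm (1, c)) = 0 := by
  rcases minDepth_nonneg.eq_or_lt with h | h
  · rw [shrinkArms_eq_self hm (by rw [← h, mul_zero])]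
    exact h.symm
  obtain ⟨x, y, hc, hx, hy⟩ := exists_eq_pair_of_mem_sunCoverB hm
    (mem_sunCoverB_of_confDepth_pos (lt_min_iff.1 h).1 (lt_min_iff.1 h).2)
  obtain ⟨hx0, hy1⟩ := confDepth_of_eq_pair_of_mem_arm hm hc hx hy
  have hs : 0 ≤ ((1 : unitInterval) : ℝ) * minDepth m c := mul_minDepth_nonneg 1 c
  have hc' : (shrinkArms m hm (1, c)).1 = {pullIn _ hs x, pullIn _ hs y} := by
    change pullIn _ hs '' c.1 = _
    rw [hc, image_pair]
  obtain ⟨h0, h1⟩ := confDepth_of_eq_pair_of_mem_arm hm hc'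
    (radialPull_mem_arm hs hx) (radialPull_mem_arm hs hy)
  have hd : minDepth m c = min (‖(x : ℂ)‖ - 1) (‖(y : ℂ)‖ - 1) := by
    rw [minDepth, hx0, hy1]
  have hdx := min_le_left (‖(x : ℂ)‖ - 1) (‖(y : ℂ)‖ - 1)
  have hdy := min_le_right (‖(x : ℂ)‖ - 1) (‖(y : ℂ)‖ - 1)
  rw [minDepth, h0, h1, pullIn, pullIn, norm_radialPull_of_mem_arm hx,
    norm_radialPull_of_mem_arm hy, Set.Icc.coe_one, one_mul, hd, max_eq_right (by linarith),
    max_eq_right (by linarith), sub_right_comm, sub_right_comm ‖(y : ℂ)‖, min_sub_sub_right,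
    sub_self]

end Retraction

section FundamentalGroup

variable {X Y : Type*} [TopologicalSpace X] [TopologicalSpace Y]

def ContinuousMap.HomotopyEquiv.ofRetraction {A : Set X} {f : C(X, X)}
    (H : (ContinuousMap.id X).Homotopy f) (hfA : ∀ x, f x ∈ A) (hf : ∀ a ∈ A, f a = a) :
    ContinuousMap.HomotopyEquiv X A where
  toFun := ⟨fun x => ⟨f x, hfA x⟩, f.continuous.subtype_mk _⟩
  invFun := ⟨Subtype.val, continuous_subtype_val⟩
  left_inv := ⟨H.symm⟩
  right_inv := by
    convert ContinuousMap.Homotopic.refl (ContinuousMap.id A)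
    exact ContinuousMap.ext fun a => Subtype.ext (hf a a.2)

open scoped FundamentalGroupoid in
def ContinuousMap.HomotopyEquiv.fundamentalGroupMulEquiv (e : ContinuousMap.HomotopyEquiv X Y)
    {x : X} {y : Y} (h : e x = y) : FundamentalGroup X x ≃* FundamentalGroup Y y :=
  let E :=
    FundamentalGroupoidFunctor.equivOfHomotopyEquiv (X := TopCat.of X) (Y := TopCat.of Y) e
  -- the objects of `E`'s category are those of `FundamentalGroupoid (TopCat.of X)`, so the monoid
  -- structures on the `End`s are found by unification rather than by instance search
  @MulEquiv.trans _ _ _ _ _ _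
    (E.fullyFaithfulFunctor.mulEquivEnd (⟨x⟩ : FundamentalGroupoid X))
    (eqToIso (congrArg FundamentalGroupoid.mk h)).conj

end FundamentalGroup

def homotopyEquivSunCoverA (m : ℕ) (hm : 2 ≤ m) :
    ContinuousMap.HomotopyEquiv (UConf 2 ↥(Lsun m)) ↥(sunCoverA m) :=
  ContinuousMap.HomotopyEquiv.ofRetraction (f := ⟨fun c => shrinkArms m hm (1, c),
      (continuous_shrinkArms hm).comp (continuous_const.prodMk continuous_id)⟩)
    { toFun := shrinkArms m hm
      continuous_toFun := continuous_shrinkArms hm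
      map_zero_left := fun c => shrinkArms_eq_self hm (by rw [Set.Icc.coe_zero, zero_mul])
      map_one_left := fun _ => rfl }
    (fun c => (mem_sunCoverA_iff hm).2 (minDepth_shrinkArms_one hm c))
    (fun _ hc => shrinkArms_of_mem_sunCoverA hm hc 1)

theorem homotopyEquivSunCoverA_apply_of_mem (m : ℕ) (hm : 2 ≤ m) {c : UConf 2 ↥(Lsun m)}
    (hc : c ∈ sunCoverA m) :
    homotopyEquivSunCoverA m hm c = ⟨c, hc⟩ :=
  Subtype.ext (shrinkArms_of_mem_sunCoverA hm hc 1)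

section Interval

variable {m : ℕ}

def armPoint (m j : ℕ) (hj : j < m) (a : ℝ) (ha : a ∈ Icc (0 : ℝ) 1) : ↥(Lsun m) :=
  ⟨((1 + a : ℝ) : ℂ) * armDir m j,
    arm_subset_lsun hj (ofReal_mul_armDir_mem_arm ⟨by linarith [ha.1], by linarith [ha.2]⟩)⟩

theorem armPoint_mem_arm {j : ℕ} (hj : j < m) {a : ℝ} (ha : a ∈ Icc (0 : ℝ) 1) :
    (armPoint m j hj a ha : ℂ) ∈ Arm m j :=
  ofReal_mul_armDir_mem_arm ⟨by linarith [ha.1], by linarith [ha.2]⟩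

theorem norm_armPoint {j : ℕ} (hj : j < m) {a : ℝ} (ha : a ∈ Icc (0 : ℝ) 1) :
    ‖(armPoint m j hj a ha : ℂ)‖ = 1 + a :=
  norm_ofReal_mul_armDir (by linarith [ha.1])

theorem max_zero_one_sub_two_mul_mem (t : unitInterval) :
    max 0 (1 - 2 * (t : ℝ)) ∈ Icc (0 : ℝ) 1 :=
  ⟨le_max_left _ _, max_le zero_le_one (by linarith [t.2.1])⟩

theorem max_zero_two_mul_sub_one_mem (t : unitInterval) :
    max 0 (2 * (t : ℝ) - 1) ∈ Icc (0 : ℝ) 1 :=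
  ⟨le_max_left _ _, max_le zero_le_one (by linarith [t.2.2])⟩

def armPairPath (m : ℕ) (hm : 2 ≤ m) (t : unitInterval) : UConf 2 ↥(Lsun m) :=
  UConf.pair (armPoint m 0 (by omega) (max 0 (1 - 2 * t)) (max_zero_one_sub_two_mul_mem t))
    (armPoint m 1 (by omega) (max 0 (2 * t - 1)) (max_zero_two_mul_sub_one_mem t)) fun h =>
      (disjoint_arm_zero_one hm).ne_of_mem (armPoint_mem_arm _ _) (armPoint_mem_arm _ _)
        (congrArg Subtype.val h)

theorem continuous_armPairPath (hm : 2 ≤ m) : Continuous (armPairPath m hm) := by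
  refine UConf.continuous_pair ?_ ?_ _ <;> refine Continuous.subtype_mk ?_ _ <;> fun_prop

def armPairParam (m : ℕ) (c : UConf 2 ↥(Lsun m)) : ℝ :=
  (1 - confDepth m 0 c + confDepth m 1 c) / 2

theorem continuous_armPairParam (hm : 2 ≤ m) : Continuous (armPairParam m) :=
  (((continuous_const.sub (continuous_confDepth (by omega))).add
    (continuous_confDepth (by omega)))).div_const _

theorem confDepth_armPairPath (hm : 2 ≤ m) (t : unitInterval) :
    confDepth m 0 (armPairPath m hm t) = max 0 (1 - 2 * (t : ℝ)) ∧
      confDepth m 1 (armPairPath m hm t) = max 0 (2 * (t : ℝ) - 1) := by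
  obtain ⟨h0, h1⟩ := confDepth_of_eq_pair_of_mem_arm hm (c := armPairPath m hm t) rfl
    (armPoint_mem_arm _ _) (armPoint_mem_arm _ _)
  rw [h0, h1, norm_armPoint, norm_armPoint, add_sub_cancel_left, add_sub_cancel_left]
  exact ⟨rfl, rfl⟩

theorem armPairParam_armPairPath (hm : 2 ≤ m) (t : unitInterval) :
    armPairParam m (armPairPath m hm t) = t := by
  obtain ⟨h0, h1⟩ := confDepth_armPairPath hm t
  rw [armPairParam, h0, h1]
  rcases le_total (t : ℝ) (1 / 2) with h | h
  · rw [max_eq_right (by linarith), max_eq_left (by linarith)]; ring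
  · rw [max_eq_left (by linarith), max_eq_right (by linarith)]; ring

theorem exists_eq_pair_of_mem_inter (hm : 2 ≤ m) {c : UConf 2 ↥(Lsun m)}
    (hc : c ∈ sunCoverA m ∩ sunCoverB m) :
    ∃ x y : ↥(Lsun m), c.1 = {x, y} ∧ (x : ℂ) ∈ Arm m 0 ∧ (y : ℂ) ∈ Arm m 1 ∧
      confDepth m 0 c = ‖(x : ℂ)‖ - 1 ∧ confDepth m 1 c = ‖(y : ℂ)‖ - 1 ∧
      min (‖(x : ℂ)‖ - 1) (‖(y : ℂ)‖ - 1) = 0 := by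
  obtain ⟨x, y, hxy, hx, hy⟩ := exists_eq_pair_of_mem_sunCoverB hm hc.2
  obtain ⟨h0, h1⟩ := confDepth_of_eq_pair_of_mem_arm hm hxy hx hy
  refine ⟨x, y, hxy, hx, hy, h0, h1, ?_⟩
  rw [← h0, ← h1]
  exact (mem_sunCoverA_iff hm).1 hc.1

theorem armPairParam_mem (hm : 2 ≤ m) {c : UConf 2 ↥(Lsun m)}
    (hc : c ∈ sunCoverA m ∩ sunCoverB m) : armPairParam m c ∈ unitInterval := by
  obtain ⟨x, y, -, hx, hy, h0, h1, -⟩ := exists_eq_pair_of_mem_inter hm hc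
  obtain ⟨hx1, hx2⟩ := (mem_arm_iff.1 hx).1
  obtain ⟨hy1, hy2⟩ := (mem_arm_iff.1 hy).1
  rw [armPairParam, h0, h1]
  constructor <;> linarith

theorem max_zero_sub_eq_of_min_eq_zero {α : Type*} [AddCommGroup α] [LinearOrder α]
    [IsOrderedAddMonoid α] {a b : α} (ha : 0 ≤ a) (hb : 0 ≤ b) (h : min a b = 0) :
    max 0 (a - b) = a := by
  rcases le_total a b with hab | hab
  · rw [min_eq_left hab] at h
    simp [h, hb]
  · rw [min_eq_right hab] at h
    simp [h, ha]

theorem armPoint_eq {j : ℕ} (hj : j < m) {a : ℝ} (ha : a ∈ Icc (0 : ℝ) 1) {x : ↥(Lsun m)}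
    (hx : (x : ℂ) ∈ Arm m j) (h : 1 + a = ‖(x : ℂ)‖) : armPoint m j hj a ha = x :=
  Subtype.ext <| by
    change ((1 + a : ℝ) : ℂ) * armDir m j = x
    rw [h]
    exact (mem_arm_iff.1 hx).2.symm

theorem armPairPath_armPairParam (hm : 2 ≤ m) {c : UConf 2 ↥(Lsun m)}
    (hc : c ∈ sunCoverA m ∩ sunCoverB m) :
    armPairPath m hm ⟨armPairParam m c, armPairParam_mem hm hc⟩ = c := by
  obtain ⟨x, y, hxy, hx, hy, h0, h1, hmin⟩ := exists_eq_pair_of_mem_inter hm hc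
  have ha : 0 ≤ ‖(x : ℂ)‖ - 1 := sub_nonneg.2 (mem_arm_iff.1 hx).1.1
  have hb : 0 ≤ ‖(y : ℂ)‖ - 1 := sub_nonneg.2 (mem_arm_iff.1 hy).1.1
  refine UConf.ext ((congrArg₂ (fun p q : ↥(Lsun m) => ({p, q} : Set ↥(Lsun m))) ?_ ?_).trans
    hxy.symm)
  · refine armPoint_eq _ _ hx ?_
    rw [show 1 - 2 * armPairParam m c = (‖(x : ℂ)‖ - 1) - (‖(y : ℂ)‖ - 1) by
      rw [armPairParam, h0, h1]; ring, max_zero_sub_eq_of_min_eq_zero ha hb hmin]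
    ring
  · refine armPoint_eq _ _ hy ?_
    rw [show 2 * armPairParam m c - 1 = (‖(y : ℂ)‖ - 1) - (‖(x : ℂ)‖ - 1) by
      rw [armPairParam, h0, h1]; ring,
      max_zero_sub_eq_of_min_eq_zero hb ha ((min_comm _ _).trans hmin)]
    ring

theorem armPairPath_mem_inter (hm : 2 ≤ m) (t : unitInterval) :
    armPairPath m hm t ∈ sunCoverA m ∩ sunCoverB m := by
  refine ⟨(mem_sunCoverA_iff hm).2 ?_, ⟨_, Or.inl rfl, armPoint_mem_arm _ _⟩,
    ⟨_, Or.inr rfl, armPoint_mem_arm _ _⟩⟩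
  obtain ⟨h0, h1⟩ := confDepth_armPairPath hm t
  rw [minDepth, h0, h1]
  rcases le_total (t : ℝ) (1 / 2) with h | h
  · rw [max_eq_left (show 2 * (t : ℝ) - 1 ≤ 0 by linarith)]
    exact min_eq_right (le_max_left _ _)
  · rw [max_eq_left (show 1 - 2 * (t : ℝ) ≤ 0 by linarith)]
    exact min_eq_left (le_max_left _ _)

def sunCoverInterHomeomorph (m : ℕ) (hm : 2 ≤ m) :
    unitInterval ≃ₜ ↥(sunCoverA m ∩ sunCoverB m) where
  toFun t := ⟨armPairPath m hm t, armPairPath_mem_inter hm t⟩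
  invFun c := ⟨armPairParam m c, armPairParam_mem hm c.2⟩
  left_inv t := Subtype.ext (armPairParam_armPairPath hm t)
  right_inv c := Subtype.ext (armPairPath_armPairParam hm c.2)
  continuous_toFun := (continuous_armPairPath hm).subtype_mk _
  continuous_invFun := ((continuous_armPairParam hm).comp continuous_subtype_val).subtype_mk _

end Interval

theorem conf_cover_and_pi1_of_A_general (n : ℕ) (hn : 2 ≤ n)
    (A B : Set (UConf 2 ↥(Lsun n)))
    (hA : A = {c | (∀ z : ↥(Lsun n), z ∈ c.1 → (z : ℂ) ∈ LminusArm n 0) ∨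
      ∀ z : ↥(Lsun n), z ∈ c.1 → (z : ℂ) ∈ LminusArm n 1})
    (hB : B = {c | (∃ z : ↥(Lsun n), z ∈ c.1 ∧ (z : ℂ) ∈ Arm n 0) ∧ ∃ z : ↥(Lsun n), z ∈ c.1 ∧ (z : ℂ) ∈ Arm n 1})
    (c₀ : UConf 2 ↥(Lsun n))
    (hc₀A : c₀ ∈ A) :
    A ∪ B = Set.univ ∧ Nonempty (↥(A ∩ B) ≃ₜ unitInterval) ∧
      Nonempty (FundamentalGroup (UConf 2 ↥(Lsun n)) c₀ ≃*
        FundamentalGroup ↥A ⟨c₀, hc₀A⟩) := by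
  obtain rfl : A = sunCoverA n := hA
  obtain rfl : B = sunCoverB n := hB
  exact ⟨sunCoverA_union_sunCoverB, ⟨(sunCoverInterHomeomorph n hn).symm⟩,
    ⟨(homotopyEquivSunCoverA n hn).fundamentalGroupMulEquiv
      (homotopyEquivSunCoverA_apply_of_mem n hn hc₀A)⟩⟩

/-- with `A = U₂(L^{-0}) ∪ U₂(L^{-1})` and
`B = {c : c meets both A₀ and A₁}`, one has `A ∪ B = U₂(Lₙ)`, `A ∩ B ≃ [0,1]`, and
`π₁(U₂(Lₙ), c₀) ≅ π₁(A, c₀)` for the base configuration `c₀ = {1, ζ}`, `ζ = e^{2πi/n}`. -/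
theorem conf_cover_and_pi1_of_A (n : ℕ) (hn : 2 ≤ n)
    (A B : Set (UConf 2 ↥(Lsun n)))
    (hA : A = {c | (∀ z : ↥(Lsun n), z ∈ c.1 → (z : ℂ) ∈ LminusArm n 0) ∨
      ∀ z : ↥(Lsun n), z ∈ c.1 → (z : ℂ) ∈ LminusArm n 1})
    (hB : B = {c | (∃ z : ↥(Lsun n), z ∈ c.1 ∧ (z : ℂ) ∈ Arm n 0) ∧ ∃ z : ↥(Lsun n), z ∈ c.1 ∧ (z : ℂ) ∈ Arm n 1})
    (c₀ : UConf 2 ↥(Lsun n))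
    (hc₀ : Subtype.val '' c₀.1 = {1, Complex.exp (2 * Real.pi / n * Complex.I)})
    (hc₀A : c₀ ∈ A) :
    A ∪ B = Set.univ ∧ Nonempty (↥(A ∩ B) ≃ₜ unitInterval) ∧
      Nonempty (FundamentalGroup (UConf 2 ↥(Lsun n)) c₀ ≃*
        FundamentalGroup ↥A ⟨c₀, hc₀A⟩) :=
  conf_cover_and_pi1_of_A_general n hn A B hA hB c₀ hc₀A

end
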